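/- Assume α₁, α₂, α₃ > 0 and that the three numbers α₁+d₂, α₂+d₁, α₃+d₃ are all strictly positive or all strictly negative. Set σ₂ = (α₁+d₂)+(α₂+d₁)+(α₃+d₃) and Q* = (√((α₃+d₃)/σ₂), √((α₁+d₂)/σ₂), √((α₂+d₁)/σ₂)). Then the set of zeros of b in the closed positive octant ℝ³₊ = {x ∈ ℝ³ : x₁ ≥ 0, x₂ ≥ 0, x₃ ≥ 0} is exactly the five-point set {O, e₁, e₂, e₃, Q*}, where O = (0,0,0), e₁ = (1,0,0), e₂ = (0,1,0), e₃ = (0,0,1); in particular Q* is the unique equilibrium with all coordinates positive. -/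

import Mathlib

open scoped RealInnerProductSpace

/-- The cubic Kolmogorov vector field on `ℝ³` (modelled as `EuclideanSpace ℝ (Fin 3)`):
`b(x)₁ = x₁(α₁ − α₁x₁² − (α₁+α₂+d₁)x₂² + d₂x₃²)`,
`b(x)₂ = x₂(α₂ + d₁x₁² − α₂x₂² − (α₂+α₃+d₃)x₃²)`,
`b(x)₃ = x₃(α₃ − (α₃+α₁+d₂)x₁² + d₃x₂² − α₃x₃²)`. -/
noncomputable def bVF (α₁ α₂ α₃ d₁ d₂ d₃ : ℝ) (x : EuclideanSpace ℝ (Fin 3)) :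
    EuclideanSpace ℝ (Fin 3) :=
  (WithLp.equiv 2 (Fin 3 → ℝ)).symm
    ![x 0 * (α₁ - α₁ * (x 0)^2 - (α₁ + α₂ + d₁) * (x 1)^2 + d₂ * (x 2)^2),
      x 1 * (α₂ + d₁ * (x 0)^2 - α₂ * (x 1)^2 - (α₂ + α₃ + d₃) * (x 2)^2),
      x 2 * (α₃ - (α₃ + α₁ + d₂) * (x 0)^2 + d₃ * (x 1)^2 - α₃ * (x 2)^2)]

/-!
Write `A = α₁+d₂`, `B = α₂+d₁`, `C = α₃+d₃`, `k = (C, A, B)`, `s = x₁²+x₂²+x₃²` and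
`y = (x₁², x₂², x₃²)`. Then `b(x)ᵢ = xᵢ (αᵢ(1 - s) + (k × y)ᵢ)`. At an interior equilibrium the
brackets vanish; taking the dot product with `k` kills the cross product and leaves
`(k ⬝ α)(1 - s) = 0`, and `k ⬝ α ≠ 0` because the entries of `k` share a sign. So `s = 1`, then
`k × y = 0` makes `y` parallel to `k`, and `y = k / σ₂` since `s = 1`. On a coordinate plane two of
the brackets combine to `(positive) · k_j = 0`, which is impossible, and on a coordinate axis the
bracket is `αᵢ(1 - xᵢ²)`. The system is invariant under rotating the coordinates cyclically, so one
plane and one axis suffice.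
-/

def SameStrictSign (a b c : ℝ) : Prop :=
  (0 < a ∧ 0 < b ∧ 0 < c) ∨ (a < 0 ∧ b < 0 ∧ c < 0)

namespace SameStrictSign

variable {a b c : ℝ}

theorem ne_zero (h : SameStrictSign a b c) : a ≠ 0 ∧ b ≠ 0 ∧ c ≠ 0 := by
  rcases h with ⟨ha, hb, hc⟩ | ⟨ha, hb, hc⟩
  · exact ⟨ha.ne', hb.ne', hc.ne'⟩
  · exact ⟨ha.ne, hb.ne, hc.ne⟩

theorem weighted_sum_ne_zero (h : SameStrictSign a b c) {p q r : ℝ}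
    (hp : 0 < p) (hq : 0 < q) (hr : 0 < r) : p * a + q * b + r * c ≠ 0 := by
  rcases h with ⟨ha, hb, hc⟩ | ⟨ha, hb, hc⟩
  · positivity
  · have hpa := mul_neg_of_pos_of_neg hp ha
    have hqb := mul_neg_of_pos_of_neg hq hb
    have hrc := mul_neg_of_pos_of_neg hr hc
    exact (by linarith : p * a + q * b + r * c < 0).ne

theorem sum_ne_zero (h : SameStrictSign a b c) : a + b + c ≠ 0 := by
  simpa using h.weighted_sum_ne_zero one_pos one_pos one_pos

theorem div_sum_nonneg (h : SameStrictSign a b c) :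
    0 ≤ a / (a + b + c) ∧ 0 ≤ b / (a + b + c) ∧ 0 ≤ c / (a + b + c) := by
  rcases h with ⟨ha, hb, hc⟩ | ⟨ha, hb, hc⟩
  · have hs : 0 ≤ a + b + c := by linarith
    exact ⟨div_nonneg ha.le hs, div_nonneg hb.le hs, div_nonneg hc.le hs⟩
  · have hs : a + b + c ≤ 0 := by linarith
    exact ⟨div_nonneg_of_nonpos ha.le hs, div_nonneg_of_nonpos hb.le hs,
      div_nonneg_of_nonpos hc.le hs⟩

end SameStrictSign

def IsCubicEquilibrium (α₁ α₂ α₃ A B C x y z : ℝ) : Prop :=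
  x * (α₁ * (1 - (x^2 + y^2 + z^2)) - B * y^2 + A * z^2) = 0 ∧
  y * (α₂ * (1 - (x^2 + y^2 + z^2)) + B * x^2 - C * z^2) = 0 ∧
  z * (α₃ * (1 - (x^2 + y^2 + z^2)) - A * x^2 + C * y^2) = 0

theorem eq_equiv_symm_vec3_iff (x : EuclideanSpace ℝ (Fin 3)) (a b c : ℝ) :
    x = (WithLp.equiv 2 (Fin 3 → ℝ)).symm ![a, b, c] ↔ x 0 = a ∧ x 1 = b ∧ x 2 = c := by
  constructor
  · rintro rfl
    exact ⟨rfl, rfl, rfl⟩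
  · rintro ⟨h0, h1, h2⟩
    ext i
    fin_cases i <;> assumption

theorem bVF_eq_zero_iff (α₁ α₂ α₃ d₁ d₂ d₃ : ℝ) (x : EuclideanSpace ℝ (Fin 3)) :
    bVF α₁ α₂ α₃ d₁ d₂ d₃ x = 0 ↔
      IsCubicEquilibrium α₁ α₂ α₃ (α₁ + d₂) (α₂ + d₁) (α₃ + d₃) (x 0) (x 1) (x 2) := by
  rw [show (0 : EuclideanSpace ℝ (Fin 3)) = (WithLp.equiv 2 (Fin 3 → ℝ)).symm ![0, 0, 0] by
    ext i; fin_cases i <;> rfl, eq_equiv_symm_vec3_iff]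
  simp only [bVF, IsCubicEquilibrium, WithLp.equiv_symm_apply, Matrix.cons_val]
  constructor <;> rintro ⟨h₁, h₂, h₃⟩ <;>
    exact ⟨by linear_combination h₁, by linear_combination h₂, by linear_combination h₃⟩

theorem isCubicEquilibrium_of_sq_eq_div {α₁ α₂ α₃ A B C x y z : ℝ} (hσ : A + B + C ≠ 0)
    (hx : x ^ 2 = C / (A + B + C)) (hy : y ^ 2 = A / (A + B + C))
    (hz : z ^ 2 = B / (A + B + C)) : IsCubicEquilibrium α₁ α₂ α₃ A B C x y z := by
  have hs : x ^ 2 + y ^ 2 + z ^ 2 = 1 := by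
    rw [hx, hy, hz, ← add_div, ← add_div, div_eq_one_iff_eq hσ]
    ring
  refine ⟨?_, ?_, ?_⟩ <;> rw [hs] <;> simp only [hx, hy, hz] <;> ring

namespace IsCubicEquilibrium

variable {α₁ α₂ α₃ A B C x y z : ℝ}

theorem rotate (h : IsCubicEquilibrium α₁ α₂ α₃ A B C x y z) :
    IsCubicEquilibrium α₂ α₃ α₁ B C A y z x := by
  obtain ⟨h₁, h₂, h₃⟩ := h
  exact ⟨by linear_combination h₂, by linear_combination h₃, by linear_combination h₁⟩

theorem eq_one_of_pos (h : IsCubicEquilibrium α₁ α₂ α₃ A B C x 0 0) (hα₁ : 0 < α₁)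
    (hx : 0 < x) : x = 1 := by
  have hbracket : α₁ * ((1 - x) * (1 + x)) = 0 := by
    linear_combination (mul_eq_zero.1 h.1).resolve_left hx.ne'
  have := (mul_eq_zero.1 ((mul_eq_zero.1 hbracket).resolve_left hα₁.ne')).resolve_right
    (by positivity)
  linarith

theorem false_of_pos_of_pos (h : IsCubicEquilibrium α₁ α₂ α₃ A B C x y 0) (hα₁ : 0 < α₁)
    (hα₂ : 0 < α₂) (hB : B ≠ 0) (hx : 0 < x) (hy : 0 < y) : False := by
  have h₁ := (mul_eq_zero.1 h.1).resolve_left hx.ne'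
  have h₂ := (mul_eq_zero.1 h.2.1).resolve_left hy.ne'
  have hcomb : B * (α₁ * x ^ 2 + α₂ * y ^ 2) = 0 := by
    linear_combination α₁ * h₂ - α₂ * h₁
  exact ((mul_eq_zero.1 hcomb).resolve_left hB).not_gt (by positivity)

theorem eq_div_sum_of_pos (h : IsCubicEquilibrium α₁ α₂ α₃ A B C x y z)
    (hB : B ≠ 0) (hσ : A + B + C ≠ 0) (hκ : α₂ * A + α₃ * B + α₁ * C ≠ 0)
    (hx : 0 < x) (hy : 0 < y) (hz : 0 < z) :
    x ^ 2 = C / (A + B + C) ∧ y ^ 2 = A / (A + B + C) ∧ z ^ 2 = B / (A + B + C) := by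
  have h₁ := (mul_eq_zero.1 h.1).resolve_left hx.ne'
  have h₂ := (mul_eq_zero.1 h.2.1).resolve_left hy.ne'
  have h₃ := (mul_eq_zero.1 h.2.2).resolve_left hz.ne'
  have hs : x ^ 2 + y ^ 2 + z ^ 2 = 1 := by
    have h : (α₂ * A + α₃ * B + α₁ * C) * (1 - (x ^ 2 + y ^ 2 + z ^ 2)) = 0 := by
      linear_combination C * h₁ + A * h₂ + B * h₃
    linarith [(mul_eq_zero.1 h).resolve_left hκ]
  have hz2 : z ^ 2 * (A + B + C) = B := by
    linear_combination h₁ - h₂ + (α₁ - α₂ + B) * hs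
  refine ⟨?_, ?_, (eq_div_iff hσ).2 hz2⟩ <;> rw [eq_div_iff hσ] <;> apply mul_left_cancel₀ hB
  · linear_combination (A + B + C) * (h₂ + α₂ * hs) + C * hz2
  · linear_combination -(A + B + C) * (h₁ + α₁ * hs) + A * hz2

theorem eq_of_nonneg (h : IsCubicEquilibrium α₁ α₂ α₃ A B C x y z)
    (hα₁ : 0 < α₁) (hα₂ : 0 < α₂) (hα₃ : 0 < α₃) (hABC : SameStrictSign A B C)
    (hx : 0 ≤ x) (hy : 0 ≤ y) (hz : 0 ≤ z) :
    (x = 0 ∧ y = 0 ∧ z = 0) ∨ (x = 1 ∧ y = 0 ∧ z = 0) ∨ (x = 0 ∧ y = 1 ∧ z = 0) ∨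
      (x = 0 ∧ y = 0 ∧ z = 1) ∨
      (x = √(C / (A + B + C)) ∧ y = √(A / (A + B + C)) ∧ z = √(B / (A + B + C))) := by
  obtain ⟨hA, hB, hC⟩ := hABC.ne_zero
  rcases hx.lt_or_eq with hx | rfl <;> rcases hy.lt_or_eq with hy | rfl <;>
    rcases hz.lt_or_eq with hz | rfl
  · obtain ⟨ex, ey, ez⟩ := h.eq_div_sum_of_pos hB hABC.sum_ne_zero
      (hABC.weighted_sum_ne_zero hα₂ hα₃ hα₁) hx hy hz
    refine .inr <| .inr <| .inr <| .inr ⟨?_, ?_, ?_⟩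
    · rw [← ex, Real.sqrt_sq hx.le]
    · rw [← ey, Real.sqrt_sq hy.le]
    · rw [← ez, Real.sqrt_sq hz.le]
  · exact (h.false_of_pos_of_pos hα₁ hα₂ hB hx hy).elim
  · exact (h.rotate.rotate.false_of_pos_of_pos hα₃ hα₁ hA hz hx).elim
  · exact .inr <| .inl ⟨h.eq_one_of_pos hα₁ hx, rfl, rfl⟩
  · exact (h.rotate.false_of_pos_of_pos hα₂ hα₃ hC hy hz).elim
  · exact .inr <| .inr <| .inl ⟨rfl, h.rotate.eq_one_of_pos hα₂ hy, rfl⟩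
  · exact .inr <| .inr <| .inr <| .inl ⟨rfl, rfl, h.rotate.rotate.eq_one_of_pos hα₃ hz⟩
  · exact .inl ⟨rfl, rfl, rfl⟩

end IsCubicEquilibrium

theorem nonneg_and_isCubicEquilibrium_iff {α₁ α₂ α₃ A B C x y z : ℝ}
    (hα₁ : 0 < α₁) (hα₂ : 0 < α₂) (hα₃ : 0 < α₃) (hABC : SameStrictSign A B C) :
    (0 ≤ x ∧ 0 ≤ y ∧ 0 ≤ z) ∧ IsCubicEquilibrium α₁ α₂ α₃ A B C x y z ↔
      (x = 0 ∧ y = 0 ∧ z = 0) ∨ (x = 1 ∧ y = 0 ∧ z = 0) ∨ (x = 0 ∧ y = 1 ∧ z = 0) ∨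
      (x = 0 ∧ y = 0 ∧ z = 1) ∨
      (x = √(C / (A + B + C)) ∧ y = √(A / (A + B + C)) ∧ z = √(B / (A + B + C))) := by
  constructor
  · rintro ⟨⟨hx, hy, hz⟩, h⟩
    exact h.eq_of_nonneg hα₁ hα₂ hα₃ hABC hx hy hz
  · rintro (⟨rfl, rfl, rfl⟩ | ⟨rfl, rfl, rfl⟩ | ⟨rfl, rfl, rfl⟩ | ⟨rfl, rfl, rfl⟩ |
      ⟨rfl, rfl, rfl⟩)
    iterate 4 norm_num [IsCubicEquilibrium]
    obtain ⟨hA, hB, hC⟩ := hABC.div_sum_nonneg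
    exact ⟨⟨Real.sqrt_nonneg _, Real.sqrt_nonneg _, Real.sqrt_nonneg _⟩,
      isCubicEquilibrium_of_sq_eq_div hABC.sum_ne_zero (Real.sq_sqrt hC) (Real.sq_sqrt hA)
        (Real.sq_sqrt hB)⟩

/-- If `αᵢ > 0` and `α₁+d₂, α₂+d₁, α₃+d₃` all have the same (strict) sign, the equilibria
of `b` in the closed positive octant are exactly `O, e₁, e₂, e₃` and the interior point
`Q* = (√((α₃+d₃)/σ₂), √((α₁+d₂)/σ₂), √((α₂+d₁)/σ₂))` with `σ₂ = (α₁+d₂)+(α₂+d₁)+(α₃+d₃)`. -/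
theorem equilibria_octant_same_sign (α₁ α₂ α₃ d₁ d₂ d₃ : ℝ)
    (hα₁ : 0 < α₁) (hα₂ : 0 < α₂) (hα₃ : 0 < α₃)
    (hsign : (0 < α₁ + d₂ ∧ 0 < α₂ + d₁ ∧ 0 < α₃ + d₃) ∨
             (α₁ + d₂ < 0 ∧ α₂ + d₁ < 0 ∧ α₃ + d₃ < 0)) :
    {x : EuclideanSpace ℝ (Fin 3) | (∀ i, 0 ≤ x i) ∧ bVF α₁ α₂ α₃ d₁ d₂ d₃ x = 0}
      = {(WithLp.equiv 2 (Fin 3 → ℝ)).symm ![0, 0, 0], (WithLp.equiv 2 (Fin 3 → ℝ)).symm ![1, 0, 0],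
         (WithLp.equiv 2 (Fin 3 → ℝ)).symm ![0, 1, 0], (WithLp.equiv 2 (Fin 3 → ℝ)).symm ![0, 0, 1],
         (WithLp.equiv 2 (Fin 3 → ℝ)).symm
           ![Real.sqrt ((α₃ + d₃) / ((α₁ + d₂) + (α₂ + d₁) + (α₃ + d₃))),
             Real.sqrt ((α₁ + d₂) / ((α₁ + d₂) + (α₂ + d₁) + (α₃ + d₃))),
             Real.sqrt ((α₂ + d₁) / ((α₁ + d₂) + (α₂ + d₁) + (α₃ + d₃)))]} := by
  ext x
  simp only [Set.mem_ofPred_eq, Set.mem_insert_iff, Set.mem_singleton_iff,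
    eq_equiv_symm_vec3_iff, bVF_eq_zero_iff, Fin.forall_fin_succ]
  simpa using nonneg_and_isCubicEquilibrium_iff hα₁ hα₂ hα₃ hsign
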